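/- Let α ∈ (0, 2π/3] and let p₁, p₂, p₃ ∈ ℝ² be affinely independent points. Then there do not exist points b₁, b₂, b₃ in the interior of the triangle conv{p₁,p₂,p₃} with ∠(p₂,b₁,p₃) = α, ∠(p₁,b₂,p₃) = α and ∠(p₁,b₃,p₂) = α such that the images of the three α-bend edges e₁ = (p₂,b₁,p₃), e₂ = (p₁,b₂,p₃), e₃ = (p₁,b₃,p₂) pairwise intersect only in their common endpoints, i.e., image(e₁) ∩ image(e₂) ⊆ {p₃}, image(e₁) ∩ image(e₃) ⊆ {p₂}, and image(e₂) ∩ image(e₃) ⊆ {p₁}. (A triangle cannot contain three pairwise noncrossing α-bend edges between its three vertices when α ≤ 2π/3.) -/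

import Mathlib

open EuclideanGeometry Real Set

noncomputable section

/-- The Euclidean plane. -/
abbrev Pt : Type := EuclideanSpace ℝ (Fin 2)

/-- The image of a one-bend edge `(a,b,c)`: the union of segments `[a,b]` and `[b,c]`. -/
def bendImage (e : Pt × Pt × Pt) : Set Pt :=
  segment ℝ e.1 e.2.1 ∪ segment ℝ e.2.1 e.2.2

/-- The endpoints of a (bend or arc) edge `(a,b,c)` are `a` and `c`. -/
def edgeEndpoints (e : Pt × Pt × Pt) : Set Pt := {e.1, e.2.2}

/-- An `α`-bend edge: a triple `(a,b,c)` with `a ≠ c` and angle `α` at `b`. -/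
def IsBendEdge (α : ℝ) (e : Pt × Pt × Pt) : Prop :=
  e.1 ≠ e.2.2 ∧ ∠ e.1 e.2.1 e.2.2 = α

/-- A plane `α`-bend multigraph on a finite vertex set `V`. -/
def IsPlaneBendMultigraph (α : ℝ) (V : Finset Pt) (E : Finset (Pt × Pt × Pt)) : Prop :=
  (∀ e ∈ E, IsBendEdge α e ∧ e.1 ∈ V ∧ e.2.2 ∈ V) ∧
  (∀ e ∈ E, ∀ f ∈ E, e ≠ f → bendImage e ≠ bendImage f) ∧
  (∀ e ∈ E, ∀ v ∈ V, (v : Pt) ∈ bendImage e → (v : Pt) ∈ edgeEndpoints e) ∧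
  (∀ e ∈ E, ∀ f ∈ E, e ≠ f →
    bendImage e ∩ bendImage f ⊆ edgeEndpoints e ∩ edgeEndpoints f)

/-- A plane `α`-bend graph: a plane `α`-bend multigraph in which distinct edges
have distinct endpoint pairs. -/
def IsPlaneBendGraph (α : ℝ) (V : Finset Pt) (E : Finset (Pt × Pt × Pt)) : Prop :=
  IsPlaneBendMultigraph α V E ∧
  ∀ e ∈ E, ∀ f ∈ E, e ≠ f → edgeEndpoints e ≠ edgeEndpoints f

/-- An `α`-arc edge: a triple `(a,b,c)` with `a ≠ c`, `b` off of the line `ac`,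
and angle `α` at `b`. -/
def IsArcEdge (α : ℝ) (e : Pt × Pt × Pt) : Prop :=
  e.1 ≠ e.2.2 ∧ e.2.1 ∉ affineSpan ℝ ({e.1, e.2.2} : Set Pt) ∧ ∠ e.1 e.2.1 e.2.2 = α

/-- The image of an arc edge `(a,b,c)`: `{a,c}` together with the points strictly on the
same side of line `ac` as `b` from which the segment `ac` subtends the same angle as at `b`. -/
def arcImage (e : Pt × Pt × Pt) : Set Pt :=
  ({e.1, e.2.2} : Set Pt) ∪
    {x : Pt | (affineSpan ℝ ({e.1, e.2.2} : Set Pt)).SSameSide x e.2.1 ∧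
      ∠ e.1 x e.2.2 = ∠ e.1 e.2.1 e.2.2}

/-- A plane `α`-arc multigraph on a finite vertex set `V`. -/
def IsPlaneArcMultigraph (α : ℝ) (V : Finset Pt) (E : Finset (Pt × Pt × Pt)) : Prop :=
  (∀ e ∈ E, IsArcEdge α e ∧ e.1 ∈ V ∧ e.2.2 ∈ V) ∧
  (∀ e ∈ E, ∀ f ∈ E, e ≠ f → arcImage e ≠ arcImage f) ∧
  (∀ e ∈ E, ∀ v ∈ V, (v : Pt) ∈ arcImage e → (v : Pt) ∈ edgeEndpoints e) ∧
  (∀ e ∈ E, ∀ f ∈ E, e ≠ f →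
    arcImage e ∩ arcImage f ⊆ edgeEndpoints e ∩ edgeEndpoints f)

/-- A plane `α`-arc graph: a plane `α`-arc multigraph in which distinct edges
have distinct endpoint pairs. -/
def IsPlaneArcGraph (α : ℝ) (V : Finset Pt) (E : Finset (Pt × Pt × Pt)) : Prop :=
  IsPlaneArcMultigraph α V E ∧
  ∀ e ∈ E, ∀ f ∈ E, e ≠ f → edgeEndpoints e ≠ edgeEndpoints f

/-- A finite point set is in general position if no three of its points are collinear. -/
def GenPos (P : Finset Pt) : Prop :=
  ∀ p ∈ P, ∀ q ∈ P, ∀ r ∈ P, p ≠ q → p ≠ r → q ≠ r →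
    ¬ Collinear ℝ ({p, q, r} : Set Pt)

/-- A planar straight-line graph on `P`: edges are (ordered representatives of unordered)
pairs of distinct points of `P` whose closed segments pairwise intersect only in shared
endpoints, and no segment contains a point of `P` other than its endpoints. -/
def IsPSLG (P : Finset Pt) (E : Finset (Pt × Pt)) : Prop :=
  (∀ e ∈ E, e.1 ∈ P ∧ e.2 ∈ P ∧ e.1 ≠ e.2) ∧
  (∀ e ∈ E, ∀ f ∈ E, e ≠ f → segment ℝ e.1 e.2 ≠ segment ℝ f.1 f.2) ∧
  (∀ e ∈ E, ∀ p ∈ P, (p : Pt) ∈ segment ℝ e.1 e.2 → p = e.1 ∨ p = e.2) ∧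
  (∀ e ∈ E, ∀ f ∈ E, e ≠ f →
    segment ℝ e.1 e.2 ∩ segment ℝ f.1 f.2 ⊆ ({e.1, e.2} : Set Pt) ∩ ({f.1, f.2} : Set Pt))

/-- `M P`: the maximum number of edges of a planar straight-line graph on `P`. -/
def M (P : Finset Pt) : ℕ :=
  sSup {m : ℕ | ∃ E : Finset (Pt × Pt), IsPSLG P E ∧ E.card = m}

/-- Two segments (given by their endpoint pairs) cross: they meet in exactly one point,
which lies in the relative interior (open segment) of both. -/
def SegCross (s t : Pt × Pt) : Prop :=
  ∃ x : Pt, segment ℝ s.1 s.2 ∩ segment ℝ t.1 t.2 = {x} ∧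
    x ∈ openSegment ℝ s.1 s.2 ∧ x ∈ openSegment ℝ t.1 t.2

/-!
At each vertex the noncrossing condition fixes the order of the rays: at `p₂`, say, the ray
towards `b₃` lies strictly between the rays towards `p₁` and `b₁`, since otherwise `[p₂, b₃]` or
`[p₁, b₃]` would cross the edge through `b₁`. Hence the six base angles of the triangles
`p₂ b₁ p₃`, `p₁ b₂ p₃`, `p₁ b₃ p₂` fit without overlap into the angles of `p₁ p₂ p₃`, leaving a
positive gap at `p₂`, so they add up to less than `π`. Each of the three triangles has apex
angle `α` and angle sum `π`, so `3α > 2π`.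
-/

lemma mk_mem_segment_mk {x₁ y₁ x₂ y₂ x y : ℝ} (θ : ℝ) (h₀ : 0 ≤ θ) (h₁ : θ ≤ 1)
    (hx : x = (1 - θ) * x₁ + θ * x₂) (hy : y = (1 - θ) * y₁ + θ * y₂) :
    (x, y) ∈ segment ℝ (x₁, y₁) (x₂, y₂) :=
  ⟨1 - θ, θ, by linarith, h₀, by ring, by simp [hx, hy]⟩

-- The picture at a vertex `q = 0` with `s = (1, 0)`, `r = (0, 1)`, `u = (a, b)`, `v = (c, d)`:
-- unless the ray towards `v` lies strictly between those towards `s` and `u`, one of `[s, v]`,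
-- `[v, q]` meets `[q, u] ∪ [u, r]` away from `q`.
theorem exists_mem_segment_inter_bend {a b c d : ℝ} (ha : 0 < a) (hb : 0 < b)
    (hab : a + b < 1) (hc : 0 < c) (hd : 0 < d) (hle : b * c ≤ a * d)
    (hbelow : (1 - b) * c + a * d ≤ a) :
    ∃ x y : ℝ, 0 < y ∧ (x, y) ∈ segment ℝ (1, 0) (c, d) ∧
      (x, y) ∈ segment ℝ (0, 0) (a, b) ∪ segment ℝ (a, b) (0, 1) := by
  rcases le_or_gt (d * (1 - a)) (b * (1 - c)) with hqu | hur
  · set E := b * (1 - c) + a * d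
    have hE : 0 < E := by nlinarith
    refine ⟨a * d / E, b * d / E, by positivity,
      mk_mem_segment_mk (b / E) (by positivity) ?_ ?_ ?_,
      Or.inl (mk_mem_segment_mk (d / E) (by positivity) ?_ ?_ ?_)⟩
    · rw [div_le_one hE]; nlinarith
    · field_simp; ring
    · field_simp; ring
    · rw [div_le_one hE]; nlinarith
    · field_simp; ring
    · field_simp; ring
  · set F := (1 - b) * (1 - c) - a * d
    have hF : 1 - a - b ≤ F := by nlinarith
    have hF0 : 0 < F := by linarith
    obtain ⟨θ, hθ⟩ : ∃ θ, θ = (1 - a - b) / F := ⟨_, rfl⟩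
    have hθ0 : 0 < θ := hθ ▸ div_pos (by linarith) hF0
    have hθ1 : θ ≤ 1 := hθ ▸ (div_le_one hF0).2 hF
    have hθF : θ * F = 1 - a - b := hθ ▸ div_mul_cancel₀ _ hF0.ne'
    refine ⟨1 - θ * (1 - c), θ * d, by positivity,
      mk_mem_segment_mk θ hθ0.le hθ1 (by ring) (by ring),
      Or.inr (mk_mem_segment_mk (1 - (1 - θ * (1 - c)) / a) ?_ ?_ ?_ ?_)⟩
    · have hkey : (1 - a) * F ≤ (1 - a - b) * (1 - c) := by
        nlinarith [mul_lt_mul_of_pos_left hur ha]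
      have : 1 - a ≤ θ * (1 - c) := by nlinarith
      rw [sub_nonneg, div_le_one ha]; linarith
    · have : 0 ≤ 1 - θ * (1 - c) := by nlinarith
      have := div_nonneg this ha.le
      linarith
    · field_simp; ring
    · field_simp
      linear_combination -hθF

theorem slope_lt_of_bends_meet_only_at_origin {a b c d : ℝ} (ha : 0 < a) (hb : 0 < b)
    (hab : a + b < 1) (hc : 0 < c) (hd : 0 < d)
    (h : (segment ℝ (0, 0) (a, b) ∪ segment ℝ (a, b) (0, 1)) ∩
      (segment ℝ (1, 0) (c, d) ∪ segment ℝ (c, d) (0, 0)) ⊆ {(0, 0)}) :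
    a * d < b * c := by
  have meet : ∀ x y : ℝ, 0 < y → (x, y) ∈ segment ℝ (0, 0) (a, b) ∪ segment ℝ (a, b) (0, 1) →
      (x, y) ∈ segment ℝ (1, 0) (c, d) ∪ segment ℝ (c, d) (0, 0) → False :=
    fun x y hy h₁ h₂ => by simpa [hy.ne'] using h ⟨h₁, h₂⟩
  by_contra! hle
  rcases lt_or_ge a ((1 - b) * c + a * d) with hbeyond | hbelow
  · -- `v` lies beyond the line `u r`, so `[v, q]` crosses `[u, r]`
    set D := (1 - b) * c + a * d
    have hD : 0 < D := ha.trans hbeyond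
    refine meet (a * c / D) (a * d / D) (by positivity)
      (Or.inr (mk_mem_segment_mk (1 - c / D) ?_ ?_ ?_ ?_))
      (Or.inr (mk_mem_segment_mk (1 - a / D) ?_ ?_ ?_ ?_))
    · rw [sub_nonneg, div_le_one hD]; nlinarith
    · have := div_pos hc hD; linarith
    · field_simp; ring
    · field_simp; ring
    · rw [sub_nonneg, div_le_one hD]; exact hbeyond.le
    · have := div_pos ha hD; linarith
    · field_simp; ring
    · field_simp; ring
  obtain ⟨x, y, hy, hsv, hbend⟩ := exists_mem_segment_inter_bend ha hb hab hc hd hle hbelow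
  exact meet x y hy hbend (Or.inl hsv)

theorem AffineIndependent.linearIndependent_vsub_pair {k V P : Type*} [Ring k]
    [AddCommGroup V] [Module k V] [AddTorsor V P] {p q r : P}
    (h : AffineIndependent k ![p, q, r]) : LinearIndependent k ![q -ᵥ p, r -ᵥ p] := by
  rw [affineIndependent_iff_linearIndependent_vsub k _ 0] at h
  convert h.comp (fun i : Fin 2 => ⟨i.succ, i.succ_ne_zero⟩)
    fun i j hij => Fin.succ_injective _ (congrArg Subtype.val hij) using 1
  ext i
  fin_cases i <;> rfl

theorem slope_lt_of_bends_meet_only_at_vertex {V : Type*} [AddCommGroup V] [Module ℝ V]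
    {q s r u v : V} (hind : LinearIndependent ℝ ![s - q, r - q]) {a b c d : ℝ}
    (ha : 0 < a) (hb : 0 < b) (hab : a + b < 1) (hc : 0 < c) (hd : 0 < d)
    (hu : u - q = a • (s - q) + b • (r - q)) (hv : v - q = c • (s - q) + d • (r - q))
    (h : (segment ℝ q u ∪ segment ℝ u r) ∩ (segment ℝ s v ∪ segment ℝ v q) ⊆ {q}) :
    a * d < b * c := by
  let φ : ℝ × ℝ →ᵃ[ℝ] V := ((LinearMap.fst ℝ ℝ ℝ).smulRight (s - q) +
    (LinearMap.snd ℝ ℝ ℝ).smulRight (r - q)).toAffineMap + AffineMap.const ℝ _ q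
  have hφ (x y : ℝ) : φ (x, y) = x • (s - q) + y • (r - q) + q := rfl
  have hq : φ (0, 0) = q := by simp [hφ]
  have hs : φ (1, 0) = s := by simp [hφ]
  have hr : φ (0, 1) = r := by simp [hφ]
  have hu' : φ (a, b) = u := by rw [hφ, ← hu, sub_add_cancel]
  have hv' : φ (c, d) = v := by rw [hφ, ← hv, sub_add_cancel]
  refine slope_lt_of_bends_meet_only_at_origin ha hb hab hc hd fun z hz => ?_
  have hφz : φ z = q := by
    have := Set.image_inter_subset φ _ _ (Set.mem_image_of_mem φ hz)
    simp only [Set.image_union, image_segment, hq, hs, hr, hu', hv'] at this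
    exact h this
  rw [← hq, hφ, hφ, add_left_inj, zero_smul, zero_smul, add_zero] at hφz
  obtain ⟨h₁, h₂⟩ := LinearIndependent.pair_iff.1 hind _ _ hφz
  exact Prod.ext h₁ h₂

section Angles

variable {V P : Type*} [NormedAddCommGroup V] [InnerProductSpace ℝ V] [MetricSpace P]
  [NormedAddTorsor V P]

theorem angle_add_angle_eq_of_vsub_eq_pos_smul_add_pos_smul {p q r x : P}
    (hind : LinearIndependent ℝ ![q -ᵥ p, r -ᵥ p]) {s t : ℝ} (hs : 0 < s) (ht : 0 < t)
    (hx : x -ᵥ p = s • (q -ᵥ p) + t • (r -ᵥ p)) :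
    ∠ q p x + ∠ x p r = ∠ q p r := by
  have hqr : q ≠ r := fun h => hind.injective.ne (by decide : (0 : Fin 2) ≠ 1) (by simp [h])
  have hxp : x ≠ p := by
    rintro rfl
    exact hs.ne' (LinearIndependent.pair_iff.1 hind s t (by rw [← hx, vsub_self])).1
  have hst : 0 < s + t := add_pos hs ht
  have hxm : x -ᵥ p = (s + t) • (AffineMap.lineMap q r (t / (s + t)) -ᵥ p) := by
    rw [hx, AffineMap.lineMap_apply, vadd_vsub_assoc, ← vsub_sub_vsub_cancel_right r q p]
    match_scalars <;> field_simp
    ring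
  refine angle_add_angle_eq_of_sbtw_of_sameRay
    (sbtw_lineMap_iff.2 ⟨hqr, div_pos ht hst, (div_lt_one hst).2 (by linarith)⟩) ?_ hxp
  rw [hxm]
  exact SameRay.sameRay_pos_smul_right _ hst

theorem angle_pos_of_vsub_eq_smul_add_smul {p q r x : P}
    (hind : LinearIndependent ℝ ![q -ᵥ p, r -ᵥ p]) {s t : ℝ} (hs : s ≠ 0)
    (hx : x -ᵥ p = s • (q -ᵥ p) + t • (r -ᵥ p)) :
    0 < ∠ x p r := by
  refine (angle_nonneg x p r).lt_of_ne' fun h => ?_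
  obtain ⟨-, κ, -, hκ⟩ := InnerProductGeometry.angle_eq_zero_iff.1 h
  obtain ⟨h₁, h₂⟩ := LinearIndependent.pair_iff.1 hind (κ * s) (κ * t - 1) (by
    rw [sub_smul, one_smul, ← sub_eq_zero.2 hκ.symm, hx]; module)
  rcases mul_eq_zero.1 h₁ with rfl | h
  · norm_num at h₂
  · exact hs h

end Angles

theorem bendImage_swap (a b c : Pt) : bendImage (c, b, a) = bendImage (a, b, c) := by
  simp only [bendImage, segment_symm ℝ c b, segment_symm ℝ b a, union_comm]

theorem exists_sub_eq_of_mem_interior_convexHull {p q r x : Pt}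
    (h : ¬ Collinear ℝ {p, q, r}) (hx : x ∈ interior (convexHull ℝ {p, q, r})) :
    ∃ a b : ℝ, 0 < a ∧ 0 < b ∧ a + b < 1 ∧ x - p = a • (q - p) + b • (r - p) := by
  have hind := affineIndependent_iff_not_collinear_set.2 h
  let B : AffineBasis (Fin 3) ℝ Pt := ⟨![p, q, r], hind,
    hind.affineSpan_eq_top_iff_card_eq_finrank_add_one.2 (by simp)⟩
  have hB : range B = {p, q, r} := by
    change range ![p, q, r] = _
    rw [Matrix.range_cons, Matrix.range_cons_cons_empty, singleton_union]
  rw [← hB, B.interior_convexHull] at hx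
  have hsum := B.sum_coord_apply_eq_one x
  have hcomb := B.linear_combination_coord_eq_self x
  simp only [Fin.sum_univ_three] at hsum hcomb
  refine ⟨B.coord 1 x, B.coord 2 x, hx 1, hx 2, by linarith [hx 0], ?_⟩
  conv_lhs => rw [← hcomb]
  change _ • p + _ • q + _ • r - p = _
  linear_combination (norm := module) hsum • p

theorem angle_add_angle_add_angle_eq_of_bends_meet_only_at_vertex {q s r u v : Pt}
    (h : ¬ Collinear ℝ {q, s, r}) (hu : u ∈ interior (convexHull ℝ {q, s, r}))
    (hv : v ∈ interior (convexHull ℝ {q, s, r}))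
    (hmeet : bendImage (q, u, r) ∩ bendImage (s, v, q) ⊆ {q}) :
    ∠ s q v + ∠ v q u + ∠ u q r = ∠ s q r ∧ 0 < ∠ v q u := by
  have hind : LinearIndependent ℝ ![s - q, r - q] :=
    (affineIndependent_iff_not_collinear_set.2 h).linearIndependent_vsub_pair
  obtain ⟨a, b, ha, hb, hab, hu⟩ := exists_sub_eq_of_mem_interior_convexHull h hu
  obtain ⟨c, d, hc, hd, -, hv⟩ := exists_sub_eq_of_mem_interior_convexHull h hv
  have horder := slope_lt_of_bends_meet_only_at_vertex hind ha hb hab hc hd hu hv hmeet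
  have hind' : LinearIndependent ℝ ![s - q, u - q] := by
    rw [hu]
    simpa [hb.ne'] using (LinearIndependent.pair_smul_smul_iff isUnit_one hb.ne'.isUnit).2 hind
  have hv' : v -ᵥ q = ((b * c - a * d) / b) • (s -ᵥ q) + (d / b) • (u -ᵥ q) := by
    simp only [vsub_eq_sub, hv, hu]
    match_scalars <;> field_simp <;> ring
  simp only [← vsub_eq_sub] at hind hind' hu
  have hsplit₁ := angle_add_angle_eq_of_vsub_eq_pos_smul_add_pos_smul hind ha hb hu
  have hsplit₂ := angle_add_angle_eq_of_vsub_eq_pos_smul_add_pos_smul hind'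
    (div_pos (by linarith) hb) (div_pos hd hb) hv'
  exact ⟨by linarith, angle_pos_of_vsub_eq_smul_add_smul hind'
    (div_pos (by linarith) hb).ne' hv'⟩

/-- For `α ∈ (0, 2π/3]`, a triangle cannot contain three pairwise noncrossing `α`-bend
edges between its three vertices. -/
theorem stmt_12 (α : ℝ) (hα : α ∈ Set.Ioc 0 (2 * π / 3))
    (p₁ p₂ p₃ : Pt) (h : AffineIndependent ℝ ![p₁, p₂, p₃]) :
    ¬ ∃ b₁ b₂ b₃ : Pt,
      b₁ ∈ interior (convexHull ℝ ({p₁, p₂, p₃} : Set Pt)) ∧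
      b₂ ∈ interior (convexHull ℝ ({p₁, p₂, p₃} : Set Pt)) ∧
      b₃ ∈ interior (convexHull ℝ ({p₁, p₂, p₃} : Set Pt)) ∧
      ∠ p₂ b₁ p₃ = α ∧ ∠ p₁ b₂ p₃ = α ∧ ∠ p₁ b₃ p₂ = α ∧
      bendImage (p₂, b₁, p₃) ∩ bendImage (p₁, b₂, p₃) ⊆ {p₃} ∧
      bendImage (p₂, b₁, p₃) ∩ bendImage (p₁, b₃, p₂) ⊆ {p₂} ∧
      bendImage (p₁, b₂, p₃) ∩ bendImage (p₁, b₃, p₂) ⊆ {p₁} := by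
  rintro ⟨b₁, b₂, b₃, hb₁, hb₂, hb₃, hα₁, hα₂, hα₃, h₁₂, h₁₃, h₂₃⟩
  have hT := affineIndependent_iff_not_collinear_set.1 h
  have e₂ : ({p₂, p₁, p₃} : Set Pt) = {p₁, p₂, p₃} := insert_comm _ _ _
  have e₃ : ({p₃, p₁, p₂} : Set Pt) = {p₁, p₂, p₃} := by rw [insert_comm, pair_comm]
  obtain ⟨hsum₂, hgap⟩ := angle_add_angle_add_angle_eq_of_bends_meet_only_at_vertex
    (by rwa [e₂]) (by rwa [e₂]) (by rwa [e₂]) h₁₃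
  obtain ⟨hsum₁, -⟩ := angle_add_angle_add_angle_eq_of_bends_meet_only_at_vertex
    hT hb₂ hb₃ (by rwa [bendImage_swap p₁ b₃ p₂])
  obtain ⟨hsum₃, -⟩ := angle_add_angle_add_angle_eq_of_bends_meet_only_at_vertex (u := b₁)
    (v := b₂) (by rwa [e₃]) (by rwa [e₃]) (by rwa [e₃]) (by rwa [bendImage_swap p₂ b₁ p₃])
  have hT₀ := angle_add_angle_add_angle_eq_pi p₃ (ne₁₂_of_not_collinear hT).symm
  have hT₁ := angle_add_angle_add_angle_eq_pi b₁ (ne₂₃_of_not_collinear hT)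
  have hT₂ := angle_add_angle_add_angle_eq_pi b₂ (ne₁₃_of_not_collinear hT)
  have hT₃ := angle_add_angle_add_angle_eq_pi b₃ (ne₁₂_of_not_collinear hT)
  linarith [hα.2, angle_comm p₃ p₂ b₁, angle_comm p₃ p₁ b₂, angle_comm b₂ p₃ p₁,
    angle_comm b₃ p₂ p₁, angle_comm p₂ p₃ p₁, angle_comm p₃ p₁ p₂, angle_nonneg b₃ p₁ b₂,
    angle_nonneg b₂ p₃ b₁]
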